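/- arXiv:1006.2956 — 2 statements merged into one kernel-verified Lean document; each statement's English description precedes it below -/
import Mathlib

section
/- Let L be a matrix indexed by a finite set X such that det(I+L) ≠ 0, and define a probability measure on subsets of X by P({S}) = det(L_S)/det(I+L). Then with K = L(I+L)^{-1}, for every subset S ⊆ X, the probability that the random subset contains S equals det(K_S). -/
/-!
Expanding the determinant row by row, `det (L + I_{Sᶜ}) = ∑_{Y ⊇ S} det L_Y`, so the left-hand
side is `det (L + I_{Sᶜ}) / det (1 + L)`. Since `K (1 + L) = L`, the matrix `L + I_{Sᶜ}` equals
`K' (1 + L)`, where `K'` has the rows of `K` indexed by `S` and identity rows elsewhere; and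
`det K' = det K_S`.
-/

open Finset Matrix

/-- The principal submatrix of `M` with rows and columns indexed by `S`. -/
def principalMinor {X : Type*} (M : Matrix X X ℝ) (S : Finset X) :
    Matrix {x // x ∈ S} {x // x ∈ S} ℝ :=
  M.submatrix (fun i => (i : X)) (fun j => (j : X))

namespace Matrix

variable {R n : Type*} [CommRing R] [Fintype n] [DecidableEq n]

theorem det_add_diagonal_eq_sum (M : Matrix n n R) (d : n → R) :
    (M + diagonal d).det =
      ∑ s : Finset n, (∏ i ∈ sᶜ, d i) * (M.submatrix (↑) (↑) : Matrix s s R).det := by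
  change detRowAlternating (M.row + (diagonal d).row) = _
  rw [detRowAlternating.map_add_univ]
  refine sum_congr rfl fun s _ => ?_
  have hrows : s.piecewise M.row (diagonal d).row =
      sᶜ.piecewise (fun i => d i • s.piecewise M.row (1 : Matrix n n R).row i)
        (s.piecewise M.row (1 : Matrix n n R).row) := by
    funext i
    by_cases hi : i ∈ s
    · rw [s.piecewise_eq_of_mem _ _ hi, sᶜ.piecewise_eq_of_notMem _ _ (notMem_compl.mpr hi),
        s.piecewise_eq_of_mem _ _ hi]
    · rw [s.piecewise_eq_of_notMem _ _ hi, sᶜ.piecewise_eq_of_mem _ _ (mem_compl.mpr hi),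
        s.piecewise_eq_of_notMem _ _ hi]
      ext j
      simp [Matrix.row, diagonal_apply, one_apply]
  rw [hrows, ← AlternatingMap.coe_multilinearMap, MultilinearMap.map_piecewise_smul, smul_eq_mul]
  exact congrArg _ (det_piecewise_one_eq_submatrix_det M s)

theorem det_add_diagonal_indicator_compl (M : Matrix n n R) (S : Finset n) :
    (M + diagonal fun i => if i ∈ S then 0 else 1).det =
      ∑ Y ∈ univ.filter (S ⊆ ·), (M.submatrix (↑) (↑) : Matrix Y Y R).det := by
  rw [det_add_diagonal_eq_sum, sum_filter]
  refine sum_congr rfl fun Y _ => ?_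
  have hprod : (∏ i ∈ Yᶜ, if i ∈ S then (0 : R) else 1) = if S ⊆ Y then 1 else 0 := by
    split_ifs with hSY
    · exact prod_eq_one fun i hi => if_neg fun hiS => mem_compl.mp hi (hSY hiS)
    · obtain ⟨i, hiS, hiY⟩ := not_subset.mp hSY
      exact prod_eq_zero (mem_compl.mpr hiY) (if_pos hiS)
  rw [hprod]
  split_ifs <;> simp

theorem det_add_diagonal_indicator_compl_eq_mul (L : Matrix n n R) (S : Finset n)
    (h : IsUnit (1 + L).det) :
    (L + diagonal fun i => if i ∈ S then 0 else 1).det =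
      (1 + L).det * ((L * (1 + L)⁻¹).submatrix (↑) (↑) : Matrix S S R).det := by
  set K := L * (1 + L)⁻¹
  have hK : K * (1 + L) = L := nonsing_inv_mul_cancel_right _ _ h
  have hfactor : of (S.piecewise K.row (1 : Matrix n n R).row) * (1 + L) =
      L + diagonal fun i => if i ∈ S then 0 else 1 := by
    ext i j
    by_cases hi : i ∈ S
    · rw [mul_apply]
      simp only [of_apply, S.piecewise_eq_of_mem _ _ hi]
      change (K * (1 + L)) i j = _
      rw [hK]
      simp [hi, diagonal_apply]
    · rw [mul_apply]
      simp only [of_apply, S.piecewise_eq_of_notMem _ _ hi]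
      change ((1 : Matrix n n R) * (1 + L)) i j = _
      rw [one_mul]
      simp [hi, diagonal_apply, one_apply, add_comm]
  rw [← hfactor, det_mul, det_piecewise_one_eq_submatrix_det, mul_comm]

end Matrix

theorem lEnsemble_containment_probability_general
    {X : Type*} [Fintype X] [DecidableEq X] (L : Matrix X X ℝ)
    (hdet : 0 < (1 + L).det) :
    ∀ S : Finset X,
      (∑ Y ∈ Finset.univ.filter (fun Y : Finset X => S ⊆ Y),
          (principalMinor L Y).det / (1 + L).det)
        = (principalMinor (L * (1 + L)⁻¹) S).det := by
  intro S
  rw [← sum_div]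
  change (∑ Y ∈ univ.filter (S ⊆ ·), (L.submatrix (↑) (↑) : Matrix Y Y ℝ).det) / _ = _
  rw [← det_add_diagonal_indicator_compl,
    det_add_diagonal_indicator_compl_eq_mul L S (isUnit_iff_ne_zero.mpr hdet.ne'),
    mul_div_cancel_left₀ _ hdet.ne']
  rfl

/-- For an L-ensemble with kernel `K = L (1+L)⁻¹`,
the probability that the random subset contains `S` equals `det K_S`. -/
theorem lEnsemble_containment_probability
    {X : Type*} [Fintype X] [DecidableEq X] (L : Matrix X X ℝ)
    (hpos : ∀ S : Finset X, 0 ≤ (principalMinor L S).det)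
    (hdet : 0 < (1 + L).det) :
    ∀ S : Finset X,
      (∑ Y ∈ Finset.univ.filter (fun Y : Finset X => S ⊆ Y),
          (principalMinor L Y).det / (1 + L).det)
        = (principalMinor (L * (1 + L)⁻¹) S).det :=
  lEnsemble_containment_probability_general L hdet
end

section
/- For n ≥ 1, t > 0 and real x: (1/(iπ)) ∫_Γ v^{−n} exp(v² − 2vx/√t) dv = (2^n/(√π t^{n/2})) ∫_ℝ H^n(y−x) e^{−y²/t} dy, where Γ goes from −i∞ to i∞ to the right of the origin. -/
/-!
For `Re v > 0` the power `v⁻ⁿ` is the Laplace transform of `Hpow n` at `2v`, up to the factor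
`2ⁿ`: `v⁻ⁿ = 2ⁿ ∫ Hpow n w e^{-2vw} dw`. Inserting this into the contour integral and exchanging
the order of integration (the integrand is dominated by `e^{-s²} · Hpow n w e^{-2cw}`), the inner
integral over the line `Re v = c` is a Gaussian, `∫ e^{v² - 2v(b+w)} ds = √π e^{-(b+w)²}` with
`b = x/√t`. The right-hand side reduces to the same integral `∫ Hpow n w e^{-(b+w)²} dw` under
the substitution `y = x + √t w`.
-/

open MeasureTheory Real Complex

noncomputable def Hpow (n : ℕ) (x : ℝ) : ℝ :=
  if 0 ≤ x then x ^ (n - 1) / (n - 1).factorial else 0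

open Set Filter Topology

lemma Hpow_eq_indicator (n : ℕ) :
    Hpow n = (Ici 0).indicator fun x : ℝ => x ^ (n - 1) / (n - 1).factorial := by
  ext x
  simp [Hpow, indicator]

@[fun_prop]
lemma measurable_Hpow (n : ℕ) : Measurable (Hpow n) := by
  rw [Hpow_eq_indicator]
  exact (by fun_prop : Measurable fun x : ℝ => x ^ (n - 1) / (n - 1).factorial).indicator
    measurableSet_Ici

lemma Hpow_nonneg (n : ℕ) (x : ℝ) : 0 ≤ Hpow n x := by
  unfold Hpow; split_ifs <;> positivity

lemma Hpow_mul_left (n : ℕ) {r : ℝ} (hr : 0 < r) (x : ℝ) :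
    Hpow (n + 1) (r * x) = r ^ n * Hpow (n + 1) x := by
  simp only [Hpow, Nat.add_sub_cancel, mul_nonneg_iff_of_pos_left hr]
  split_ifs <;> ring

lemma integrableOn_pow_mul_exp_neg_mul_Ioi (k : ℕ) {r : ℝ} (hr : 0 < r) :
    IntegrableOn (fun w : ℝ => w ^ k * rexp (-(r * w))) (Ioi 0) := by
  simpa [Real.rpow_natCast] using
    integrableOn_rpow_mul_exp_neg_mul_rpow (s := k) (p := 1)
      (by linarith [k.cast_nonneg (α := ℝ)]) one_pos hr

lemma integrable_Hpow_mul_exp_neg_mul (n : ℕ) {r : ℝ} (hr : 0 < r) :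
    Integrable fun w : ℝ => Hpow n w * rexp (-(r * w)) := by
  have hind : (fun w : ℝ => Hpow n w * rexp (-(r * w))) =
      (Ici 0).indicator fun w => (w ^ (n - 1) * rexp (-(r * w))) / (n - 1).factorial := by
    ext w; simp only [Hpow, indicator, mem_Ici]; split_ifs <;> ring
  rw [hind, integrable_indicator_iff measurableSet_Ici, integrableOn_Ici_iff_integrableOn_Ioi]
  exact (integrableOn_pow_mul_exp_neg_mul_Ioi _ hr).div_const _

lemma norm_ofReal_pow_mul_cexp_neg_mul (k : ℕ) (z : ℂ) {w : ℝ} (hw : 0 ≤ w) :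
    ‖(w : ℂ) ^ k * cexp (-(z * w))‖ = w ^ k * rexp (-(z.re * w)) := by
  simp [Complex.norm_exp, abs_of_nonneg hw]

lemma integrableOn_ofReal_pow_mul_cexp_neg_mul_Ioi (k : ℕ) {z : ℂ} (hz : 0 < z.re) :
    IntegrableOn (fun w : ℝ => (w : ℂ) ^ k * cexp (-(z * w))) (Ioi 0) := by
  refine (integrableOn_pow_mul_exp_neg_mul_Ioi k hz).mono' (by fun_prop) ?_
  filter_upwards [ae_restrict_mem measurableSet_Ioi] with w hw
  exact (norm_ofReal_pow_mul_cexp_neg_mul k z (le_of_lt hw)).le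

lemma tendsto_ofReal_pow_mul_cexp_neg_mul_atTop (k : ℕ) {z : ℂ} (hz : 0 < z.re) :
    Tendsto (fun w : ℝ => (w : ℂ) ^ k * cexp (-(z * w))) atTop (𝓝 0) := by
  rw [tendsto_zero_iff_norm_tendsto_zero]
  have hreal : Tendsto (fun w : ℝ => w ^ k * rexp (-(z.re * w))) atTop (𝓝 0) := by
    simpa [Real.rpow_natCast] using tendsto_rpow_mul_exp_neg_mul_atTop_nhds_zero k z.re hz
  refine hreal.congr' ?_
  filter_upwards [eventually_ge_atTop 0] with w hw
  exact (norm_ofReal_pow_mul_cexp_neg_mul k z hw).symm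

lemma integral_ofReal_pow_succ_mul_cexp_neg_mul_Ioi (k : ℕ) {z : ℂ} (hz : 0 < z.re) :
    ∫ w in Ioi (0 : ℝ), (w : ℂ) ^ (k + 1) * cexp (-(z * w)) =
      (k + 1) / z * ∫ w in Ioi (0 : ℝ), (w : ℂ) ^ k * cexp (-(z * w)) := by
  have hz0 : z ≠ 0 := by rintro rfl; simp at hz
  have hexp (w : ℝ) : HasDerivAt (fun w : ℝ => cexp (-(z * w)) / -z) (cexp (-(z * w))) w := by
    have hlin : HasDerivAt (fun w : ℝ => -(z * w)) (-z) w := by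
      simpa using ((hasDerivAt_id (w : ℂ)).const_mul z).neg.comp_ofReal
    exact (hlin.cexp.div_const (-z)).congr_deriv (by field_simp)
  have hpow (w : ℝ) : HasDerivAt (fun w : ℝ => (w : ℂ) ^ (k + 1)) ((k + 1) * (w : ℂ) ^ k) w := by
    simpa using (hasDerivAt_pow (k + 1) (w : ℂ)).comp_ofReal
  have hint : IntegrableOn
      (fun w : ℝ => ((k + 1) * (w : ℂ) ^ k) * (cexp (-(z * w)) / -z)) (Ioi 0) :=
    IntegrableOn.congr_fun ((integrableOn_ofReal_pow_mul_cexp_neg_mul_Ioi k hz).const_mul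
      ((k + 1) / -z)) (fun w _ => by ring) measurableSet_Ioi
  have hprod : Continuous fun w : ℝ => (w : ℂ) ^ (k + 1) * (cexp (-(z * w)) / -z) := by
    fun_prop
  have hparts := integral_Ioi_mul_deriv_eq_deriv_mul (a := 0) (a' := 0) (b' := 0)
    (fun w _ => hpow w) (fun w _ => hexp w)
    (integrableOn_ofReal_pow_mul_cexp_neg_mul_Ioi (k + 1) hz) hint
    (by rw [Pi.mul_def]; simpa using hprod.continuousWithinAt (s := Ioi 0) (x := 0) |>.tendsto)
    (by
      rw [Pi.mul_def]
      simpa [mul_div_assoc] using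
        (tendsto_ofReal_pow_mul_cexp_neg_mul_atTop (k + 1) hz).div_const (-z))
  rw [hparts, sub_self, zero_sub, ← integral_neg, ← integral_const_mul]
  congr 1 with w
  field_simp

lemma integral_ofReal_pow_mul_cexp_neg_mul_Ioi (k : ℕ) {z : ℂ} (hz : 0 < z.re) :
    ∫ w in Ioi (0 : ℝ), (w : ℂ) ^ k * cexp (-(z * w)) = k.factorial / z ^ (k + 1) := by
  have hz0 : z ≠ 0 := by rintro rfl; simp at hz
  induction k with
  | zero => simpa [neg_mul] using integral_exp_mul_complex_Ioi (a := -z) (by simpa) 0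
  | succ k ih =>
    rw [integral_ofReal_pow_succ_mul_cexp_neg_mul_Ioi k hz, ih, Nat.factorial_succ]
    push_cast
    field_simp
    ring

lemma integral_Hpow_mul_cexp_neg_mul (m : ℕ) {z : ℂ} (hz : 0 < z.re) :
    ∫ w : ℝ, (Hpow (m + 1) w : ℂ) * cexp (-(z * w)) = (z ^ (m + 1))⁻¹ := by
  have hind : (fun w : ℝ => (Hpow (m + 1) w : ℂ) * cexp (-(z * w))) =
      (Ici 0).indicator fun w : ℝ => (w : ℂ) ^ m * cexp (-(z * w)) / m.factorial := by
    ext w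
    simp only [Hpow, indicator, mem_Ici, Nat.add_sub_cancel]
    split_ifs <;> push_cast <;> ring
  rw [hind, integral_indicator measurableSet_Ici, integral_Ici_eq_integral_Ioi, integral_div,
    integral_ofReal_pow_mul_cexp_neg_mul_Ioi m hz, div_right_comm,
    div_self (Nat.cast_ne_zero.mpr m.factorial_ne_zero), one_div]

lemma integral_cexp_vertical_sq_sub (c b : ℝ) :
    ∫ s : ℝ, cexp (((c : ℂ) + s * I) ^ 2 - 2 * ((c : ℂ) + s * I) * b) =
      ((√π * rexp (-b ^ 2) : ℝ) : ℂ) := by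
  have hquad (s : ℝ) : ((c : ℂ) + s * I) ^ 2 - 2 * ((c : ℂ) + s * I) * b =
      -1 * s ^ 2 + 2 * I * (c - b) * s + (c ^ 2 - 2 * c * b) := by
    linear_combination (s : ℂ) ^ 2 * I_sq
  simp_rw [hquad]
  rw [integral_cexp_quadratic (by norm_num)]
  have hsqrt : ((π : ℂ) / -(-1)) ^ (1 / 2 : ℂ) = (√π : ℂ) := by
    rw [neg_neg, div_one, Real.sqrt_eq_rpow, Complex.ofReal_cpow Real.pi_pos.le]
    norm_num
  rw [hsqrt]
  push_cast
  congr 2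
  linear_combination ((c : ℂ) - b) ^ 2 * I_sq

lemma zpow_neg_succ_mul_cexp_eq_integral_Hpow (m : ℕ) {v : ℂ} (hv : 0 < v.re) (b : ℂ) :
    v ^ (-((m + 1 : ℕ) : ℤ)) * cexp (v ^ 2 - 2 * v * b) =
      2 ^ (m + 1) * ∫ w : ℝ, (Hpow (m + 1) w : ℂ) * cexp (v ^ 2 - 2 * v * (b + w)) := by
  have hexp (w : ℝ) : (Hpow (m + 1) w : ℂ) * cexp (v ^ 2 - 2 * v * (b + w)) =
      (Hpow (m + 1) w : ℂ) * cexp (-(2 * v * w)) * cexp (v ^ 2 - 2 * v * b) := by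
    rw [mul_assoc _ (cexp _), ← Complex.exp_add]; ring_nf
  simp_rw [hexp]
  rw [integral_mul_const, integral_Hpow_mul_cexp_neg_mul m (by simpa using hv), zpow_neg,
    zpow_natCast, mul_pow]
  field_simp

lemma integral_vertical_zpow_mul_cexp (m : ℕ) {c : ℝ} (hc : 0 < c) (b : ℝ) :
    ∫ s : ℝ, ((c : ℂ) + s * I) ^ (-((m + 1 : ℕ) : ℤ)) *
        cexp (((c : ℂ) + s * I) ^ 2 - 2 * ((c : ℂ) + s * I) * b) =
      ((2 ^ (m + 1) * √π * ∫ w : ℝ, Hpow (m + 1) w * rexp (-(b + w) ^ 2) : ℝ) : ℂ) := by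
  set F : ℝ → ℝ → ℂ := fun s w =>
    (Hpow (m + 1) w : ℂ) * cexp (((c : ℂ) + s * I) ^ 2 - 2 * ((c : ℂ) + s * I) * (b + w))
  have hnorm (s w : ℝ) : ‖F s w‖ =
      rexp (c ^ 2 - 2 * c * b) * rexp (-s ^ 2) * (Hpow (m + 1) w * rexp (-(2 * c * w))) := by
    simp only [F, norm_mul, Complex.norm_real, Real.norm_eq_abs, abs_of_nonneg (Hpow_nonneg _ w),
      Complex.norm_exp]
    have hre : (((c : ℂ) + s * I) ^ 2 - 2 * ((c : ℂ) + s * I) * (b + w)).re =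
        (c ^ 2 - 2 * c * b) + -s ^ 2 + -(2 * c * w) := by
      simp [sq]; ring
    rw [hre, Real.exp_add, Real.exp_add]
    ring
  have hint : Integrable (Function.uncurry F) (volume.prod volume) := by
    have hgauss : Integrable fun s : ℝ => rexp (c ^ 2 - 2 * c * b) * rexp (-1 * s ^ 2) :=
      (integrable_exp_neg_mul_sq one_pos).const_mul _
    refine Integrable.mono'
      (hgauss.mul_prod (integrable_Hpow_mul_exp_neg_mul (m + 1) (by positivity : 0 < 2 * c)))
      (by fun_prop) (ae_of_all _ fun p => (hnorm p.1 p.2).le.trans (by simp))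
  calc _ = ∫ s : ℝ, 2 ^ (m + 1) * ∫ w : ℝ, F s w := by
        congr 1; ext s
        exact zpow_neg_succ_mul_cexp_eq_integral_Hpow m (by simpa using hc) b
    _ = 2 ^ (m + 1) * ∫ w : ℝ, ∫ s : ℝ, F s w := by
        rw [integral_const_mul, integral_integral_swap hint]
    _ = 2 ^ (m + 1) * ∫ w : ℝ, ((√π * (Hpow (m + 1) w * rexp (-(b + w) ^ 2)) : ℝ) : ℂ) := by
        congr 1; congr 1 with w
        have hgauss := integral_cexp_vertical_sq_sub c (b + w)
        push_cast at hgauss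
        simp only [F, integral_const_mul, hgauss]
        push_cast; ring
    _ = _ := by
        rw [integral_complex_ofReal, integral_const_mul]
        push_cast; ring

lemma integral_Hpow_sub_mul_exp_neg_sq_div (m : ℕ) {t : ℝ} (ht : 0 < t) (x : ℝ) :
    ∫ y : ℝ, Hpow (m + 1) (y - x) * rexp (-y ^ 2 / t) =
      √t ^ (m + 1) * ∫ w : ℝ, Hpow (m + 1) w * rexp (-(x / √t + w) ^ 2) := by
  have hst : 0 < √t := Real.sqrt_pos.mpr ht
  set f : ℝ → ℝ := fun y => Hpow (m + 1) (y - x) * rexp (-y ^ 2 / t)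
  have hsubst (w : ℝ) : f (x + √t * w) = √t ^ m * (Hpow (m + 1) w * rexp (-(x / √t + w) ^ 2)) := by
    have hexp : -(x + √t * w) ^ 2 / t = -(x / √t + w) ^ 2 := by
      nth_rw 2 [← Real.sq_sqrt ht.le]; field_simp
    simp only [f, add_sub_cancel_left, Hpow_mul_left m hst, hexp]
    ring
  calc ∫ y, f y = ∫ z, f (x + z) := (integral_add_left_eq_self f x).symm
    _ = √t * ∫ w, f (x + √t * w) := by
        rw [Measure.integral_comp_mul_left (fun z => f (x + z)), abs_inv, abs_of_pos hst,
          smul_eq_mul, mul_inv_cancel_left₀ hst.ne']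
    _ = _ := by simp_rw [hsubst]; rw [integral_const_mul]; ring

/-- for `n ≥ 1`, `t > 0` and real `x`,
`(1/(iπ)) ∫_Γ v^{−n} e^{v² − 2vx/√t} dv = (2^n/(√π t^{n/2})) ∫_ℝ H^n(y−x) e^{−y²/t} dy`,
where `Γ` is the upward-oriented vertical line `Re v = c > 0`
(so `∫_Γ f(v) dv = i ∫_ℝ f(c + is) ds`). -/
theorem contour_Hpow_representation (n : ℕ) (hn : 1 ≤ n) (t x : ℝ) (ht : 0 < t)
    (c : ℝ) (hc : 0 < c) :
    (1 / (Complex.I * (Real.pi : ℂ))) *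
        (Complex.I * ∫ s : ℝ, ((c : ℂ) + (s : ℂ) * Complex.I) ^ (-(n : ℤ)) *
            Complex.exp (((c : ℂ) + (s : ℂ) * Complex.I) ^ 2 -
              2 * ((c : ℂ) + (s : ℂ) * Complex.I) * (x : ℂ) / (Real.sqrt t : ℂ))) =
      (((2 : ℝ) ^ n / (Real.sqrt Real.pi * t ^ ((n : ℝ) / 2)) *
          ∫ y : ℝ, Hpow n (y - x) * Real.exp (-y ^ 2 / t) : ℝ) : ℂ) := by
  obtain ⟨m, rfl⟩ : ∃ m, n = m + 1 := ⟨n - 1, by omega⟩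
  have hdiv (v : ℂ) : 2 * v * (x : ℂ) / (√t : ℂ) = 2 * v * ((x / √t : ℝ) : ℂ) := by
    push_cast; ring
  simp_rw [hdiv]
  rw [integral_vertical_zpow_mul_cexp m hc, integral_Hpow_sub_mul_exp_neg_sq_div m ht,
    Real.rpow_div_two_eq_sqrt _ ht.le, Real.rpow_natCast]
  have hπ : (√π : ℂ) ^ 2 = π := by exact_mod_cast Real.sq_sqrt Real.pi_pos.le
  have hst : (√t : ℂ) ≠ 0 := by exact_mod_cast (Real.sqrt_pos.mpr ht).ne'
  have hsπ : (√π : ℂ) ≠ 0 := by exact_mod_cast (Real.sqrt_pos.mpr Real.pi_pos).ne'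
  push_cast
  field_simp
  rw [← hπ]
end
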